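/- arXiv:2201.01222 — 2 statements merged into one kernel-verified Lean document; each statement's English description precedes it below -/
import Mathlib

section
/- Let S be a finite nonempty set with n = |S|, let κ : S → ℝ, and let c ≥ 0 satisfy max_{x∈S} κ(x) − min_{x∈S} κ(x) ≤ c. Then H_S(k) ≤ c for every k with 1 ≤ k ≤ n. -/
open Finset

/-- The bandwidth of a finite part `A`: the range `max κ - min κ` of the complexities over `A`
(equal to the range of the optimality deficiencies `δ(A,x) = c_A - κ x`). -/
noncomputable def band {α : Type*} (κ : α → ℝ) (A : Finset α) : ℝ :=
  if h : A.Nonempty then A.sup' h κ - A.inf' h κ else 0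

/-- `P` is a partition of the finite set `S` into exactly `k` nonempty pairwise disjoint parts. -/
def IsPartition {α : Type*} [DecidableEq α] (S : Finset α) (k : ℕ)
    (P : Finset (Finset α)) : Prop :=
  P.card = k ∧ (∀ A ∈ P, A.Nonempty) ∧
    (∀ A ∈ P, ∀ B ∈ P, A ≠ B → Disjoint A B) ∧ P.sup id = S

/-- The bandwidth criterion value of a partition: the sum of the bandwidths of its parts. -/
noncomputable def critVal {α : Type*} (κ : α → ℝ) (P : Finset (Finset α)) : ℝ :=
  ∑ A ∈ P, band κ A

/-- The cluster structure function: the minimal criterion value over all partitions of `S`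
into exactly `k` nonempty parts. -/
noncomputable def csf {α : Type*} [DecidableEq α] (S : Finset α) (κ : α → ℝ) (k : ℕ) : ℝ :=
  sInf {r : ℝ | ∃ P : Finset (Finset α), IsPartition S k P ∧ r = critVal κ P}

lemma band_nonneg {α : Type*} (κ : α → ℝ) (A : Finset α) : 0 ≤ band κ A := by
  unfold band
  split
  · next h =>
    obtain ⟨x, hx⟩ := h
    have h1 := Finset.le_sup' κ hx
    have h2 := Finset.inf'_le κ hx
    linarith
  · exact le_refl 0

lemma band_singleton {α : Type*} (κ : α → ℝ) (a : α) : band κ {a} = 0 := by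
  simp [band]

/-- Lemma 2.4 (combinatorial core): if the range of the complexities over `S` is bounded by
`c ≥ 0`, then `H_S(k) ≤ c` for every `1 ≤ k ≤ n`. -/
theorem stmt_6 {α : Type*} [DecidableEq α] (S : Finset α) (hS : S.Nonempty) (κ : α → ℝ)
    (c : ℝ) (hc : 0 ≤ c) (hrange : S.sup' hS κ - S.inf' hS κ ≤ c) :
    ∀ k, 1 ≤ k → k ≤ S.card → csf S κ k ≤ c := by
  intro k hk1 hk2
  obtain ⟨T, hTS, hTcard⟩ :=
    Finset.exists_subset_card_eq (le_trans (Nat.sub_le k 1) hk2 : k - 1 ≤ S.card)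
  set R : Finset α := S \ T with hR
  have hRne : R.Nonempty := by
    rw [← Finset.card_pos, Finset.card_sdiff_of_subset hTS, hTcard]
    omega
  have hRT : Disjoint R T := Finset.sdiff_disjoint
  set P : Finset (Finset α) := insert R (T.image ({·})) with hP
  have hRnotmem : R ∉ T.image ({·}) := by
    intro h
    obtain ⟨a, haT, ha⟩ := Finset.mem_image.mp h
    have : a ∈ R := ha ▸ Finset.mem_singleton_self a
    exact (Finset.disjoint_left.mp hRT this) haT
  have hinj : Set.InjOn ({·} : α → Finset α) T := fun a _ b _ h => by
    simpa using h
  have hpart : IsPartition S k P := by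
    refine ⟨?_, ?_, ?_, ?_⟩
    · rw [hP, Finset.card_insert_of_notMem hRnotmem, Finset.card_image_of_injOn hinj, hTcard]
      omega
    · intro A hA
      rcases Finset.mem_insert.mp hA with h | h
      · exact h ▸ hRne
      · obtain ⟨a, _, ha⟩ := Finset.mem_image.mp h
        exact ha ▸ Finset.singleton_nonempty a
    · intro A hA B hB hAB
      have key : ∀ X ∈ P, ∀ Y ∈ P, X ≠ Y → X = R → Disjoint X Y := by
        intro X hX Y hY hXY hXR
        rcases Finset.mem_insert.mp hY with h | h
        · exact absurd (hXR.trans h.symm) hXY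
        · obtain ⟨a, haT, ha⟩ := Finset.mem_image.mp h
          rw [hXR, ← ha]
          exact Finset.disjoint_singleton_right.mpr (Finset.disjoint_left.mp hRT · haT)
      rcases Finset.mem_insert.mp hA with h | h
      · exact key A hA B hB hAB h
      · rcases Finset.mem_insert.mp hB with h' | h'
        · exact (key B hB A hA hAB.symm h').symm
        · obtain ⟨a, _, ha⟩ := Finset.mem_image.mp h
          obtain ⟨b, _, hb⟩ := Finset.mem_image.mp h'
          rw [← ha, ← hb]
          rw [← ha, ← hb] at hAB
          exact Finset.disjoint_singleton.mpr (by simpa using hAB)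
    · rw [hP, Finset.sup_insert]
      have : (T.image ({·})).sup id = T := by
        apply Finset.Subset.antisymm
        · intro x hx
          simp only [Finset.mem_sup, Finset.mem_image, id] at hx
          obtain ⟨A, ⟨a, haT, ha⟩, hxA⟩ := hx
          rw [← ha] at hxA
          exact (Finset.mem_singleton.mp hxA) ▸ haT
        · intro x hx
          exact Finset.mem_sup.mpr ⟨{x}, Finset.mem_image_of_mem _ hx,
            Finset.mem_singleton_self x⟩
      rw [this, id]
      exact Finset.sdiff_union_of_subset hTS
  have hcrit : critVal κ P ≤ c := by
    rw [hP, critVal, Finset.sum_insert hRnotmem]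
    have h1 : ∑ A ∈ T.image ({·}), band κ A = 0 := by
      apply Finset.sum_eq_zero
      intro A hA
      obtain ⟨a, _, ha⟩ := Finset.mem_image.mp hA
      exact ha ▸ band_singleton κ a
    rw [h1, add_zero]
    have hRS : R ⊆ S := Finset.sdiff_subset
    rw [band, dif_pos hRne]
    have h2 : R.sup' hRne κ ≤ S.sup' hS κ :=
      Finset.sup'_le hRne κ fun x hx => Finset.le_sup' κ (hRS hx)
    have h3 : S.inf' hS κ ≤ R.inf' hRne κ :=
      Finset.le_inf' hRne κ fun x hx => Finset.inf'_le κ (hRS hx)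
    linarith
  have hmem : critVal κ P ∈
      {r : ℝ | ∃ Q : Finset (Finset α), IsPartition S k Q ∧ r = critVal κ Q} :=
    ⟨P, hpart, rfl⟩
  have hbdd : BddBelow {r : ℝ | ∃ Q : Finset (Finset α), IsPartition S k Q ∧ r = critVal κ Q} := by
    refine ⟨0, fun r hr => ?_⟩
    obtain ⟨Q, _, hrQ⟩ := hr
    rw [hrQ, critVal]
    exact Finset.sum_nonneg fun A _ => band_nonneg κ A
  exact le_trans (csInf_le hbdd hmem) hcrit
end

section
/- Let S be a finite set with n = |S| ≥ 2 and let κ : S → ℝ be injective. Then H_S(1) > 0, H_S(n) = 0, and H_S(k+1) ≤ H_S(k) for every k with 1 ≤ k ≤ n − 1. -/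
open Finset

lemma critVal_nonneg {α : Type*} (κ : α → ℝ) (P : Finset (Finset α)) : 0 ≤ critVal κ P :=
  Finset.sum_nonneg fun A _ => band_nonneg κ A

lemma band_erase_le {α : Type*} [DecidableEq α] (κ : α → ℝ) {A : Finset α} {a : α}
    (ha : a ∈ A) (hB : (A.erase a).Nonempty) : band κ (A.erase a) ≤ band κ A := by
  have hA : A.Nonempty := ⟨a, ha⟩
  have hsub : A.erase a ⊆ A := Finset.erase_subset a A
  have h1 : (A.erase a).sup' hB κ ≤ A.sup' hA κ :=
    Finset.sup'_le hB κ fun x hx => Finset.le_sup' κ (hsub hx)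
  have h2 : A.inf' hA κ ≤ (A.erase a).inf' hB κ :=
    Finset.le_inf' hB κ fun x hx => Finset.inf'_le κ (hsub hx)
  simp only [band, dif_pos hA, dif_pos hB]
  linarith

lemma card_sum_of_partition {α : Type*} [DecidableEq α] {S : Finset α} {k : ℕ}
    {P : Finset (Finset α)} (hP : IsPartition S k P) : ∑ A ∈ P, A.card = S.card := by
  obtain ⟨-, -, hdisj, hsup⟩ := hP
  have : S = P.biUnion id := by rw [← hsup, Finset.sup_eq_biUnion]
  rw [this]
  exact (Finset.card_biUnion (fun A hA B hB hAB => hdisj A hA B hB hAB)).symm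

lemma split_partition {α : Type*} [DecidableEq α] {S : Finset α} {k : ℕ}
    {P : Finset (Finset α)} (κ : α → ℝ) (hP : IsPartition S k P) (hk : k < S.card) :
    ∃ P', IsPartition S (k + 1) P' ∧ critVal κ P' ≤ critVal κ P := by
  obtain ⟨hcard, hne, hdisj, hsup⟩ := hP
  -- there is a part with at least two elements
  have hbig : ∃ A ∈ P, 2 ≤ A.card := by
    by_contra h
    push_neg at h
    have : ∑ A ∈ P, A.card = P.card := by
      rw [Finset.card_eq_sum_ones P]
      refine Finset.sum_congr rfl fun A hA => ?_
      have h1 : 1 ≤ A.card := Finset.card_pos.mpr (hne A hA)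
      have h2 := h A hA
      omega
    have := card_sum_of_partition ⟨hcard, hne, hdisj, hsup⟩
    omega
  obtain ⟨A, hA, hA2⟩ := hbig
  obtain ⟨a, ha⟩ : A.Nonempty := hne A hA
  set B := A.erase a with hBdef
  have hBne : B.Nonempty := by
    rw [← Finset.card_pos, Finset.card_erase_of_mem ha]; omega
  have haB : a ∉ B := Finset.notMem_erase a A
  have hBsub : B ⊆ A := Finset.erase_subset a A
  have hBA : B ≠ A := fun h => haB (h ▸ ha)
  have haA : ({a} : Finset α) ≠ A := by
    intro h
    have : A.card = 1 := by rw [← h]; simp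
    omega
  have haneB : ({a} : Finset α) ≠ B := by
    intro h
    exact haB (h ▸ Finset.mem_singleton_self a)
  have hBnotin : B ∉ P.erase A := by
    intro h
    have hBP := Finset.mem_of_mem_erase h
    have hne' : B ≠ A := Finset.ne_of_mem_erase h
    obtain ⟨b, hb⟩ := hBne
    exact (Finset.disjoint_left.mp (hdisj B hBP A hA hne') hb) (hBsub hb)
  have hanotin : ({a} : Finset α) ∉ P.erase A := by
    intro h
    have haP := Finset.mem_of_mem_erase h
    have hne' : ({a} : Finset α) ≠ A := Finset.ne_of_mem_erase h
    exact (Finset.disjoint_left.mp (hdisj _ haP A hA hne') (Finset.mem_singleton_self a)) ha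
  have hanotin2 : ({a} : Finset α) ∉ insert B (P.erase A) := by
    simp only [Finset.mem_insert]
    rintro (h | h)
    · exact haneB h
    · exact hanotin h
  refine ⟨insert {a} (insert B (P.erase A)), ⟨?_, ?_, ?_, ?_⟩, ?_⟩
  · rw [Finset.card_insert_of_notMem hanotin2, Finset.card_insert_of_notMem hBnotin,
      Finset.card_erase_of_mem hA, hcard]
    have : 1 ≤ k := by
      have := Finset.card_pos.mpr ⟨A, hA⟩; omega
    omega
  · intro X hX
    simp only [Finset.mem_insert] at hX
    rcases hX with h | h | h
    · exact h ▸ Finset.singleton_nonempty a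
    · exact h ▸ hBne
    · exact hne X (Finset.mem_of_mem_erase h)
  · intro X hX Y hY hXY
    simp only [Finset.mem_insert] at hX hY
    have key : ∀ C ∈ P.erase A, Disjoint A C := fun C hC =>
      hdisj A hA C (Finset.mem_of_mem_erase hC) (Ne.symm (Finset.ne_of_mem_erase hC))
    have hsubA : ({a} : Finset α) ⊆ A := Finset.singleton_subset_iff.mpr ha
    rcases hX with rfl | rfl | hX <;> rcases hY with rfl | rfl | hY
    · exact absurd rfl hXY
    · exact Finset.disjoint_singleton_left.mpr haB
    · exact Finset.disjoint_of_subset_left hsubA (key Y hY)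
    · exact (Finset.disjoint_singleton_left.mpr haB).symm
    · exact absurd rfl hXY
    · exact Finset.disjoint_of_subset_left hBsub (key Y hY)
    · exact (Finset.disjoint_of_subset_left hsubA (key X hX)).symm
    · exact (Finset.disjoint_of_subset_left hBsub (key X hX)).symm
    · exact hdisj X (Finset.mem_of_mem_erase hX) Y (Finset.mem_of_mem_erase hY)
        hXY
  · have hPsup : P.sup id = A ⊔ (P.erase A).sup id := by
      conv_lhs => rw [← Finset.insert_erase hA]
      rw [Finset.sup_insert]; rfl
    rw [Finset.sup_insert, Finset.sup_insert]
    have : ({a} : Finset α) ⊔ B = A := by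
      rw [Finset.sup_eq_union]
      exact (Finset.insert_eq a B) ▸ Finset.insert_erase ha
    rw [← hsup, hPsup, ← sup_assoc]
    simp only [id]
    rw [this]
  · have hsum : critVal κ P = band κ A + ∑ C ∈ P.erase A, band κ C := by
      rw [critVal, ← Finset.add_sum_erase P _ hA]
    rw [critVal, Finset.sum_insert hanotin2, Finset.sum_insert hBnotin, hsum,
      band_singleton]
    have := band_erase_le κ ha hBne
    linarith

lemma exists_partition {α : Type*} [DecidableEq α] (S : Finset α) (κ : α → ℝ) :
    ∀ k, 1 ≤ k → k ≤ S.card → ∃ P, IsPartition S k P := by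
  intro k
  induction k with
  | zero => omega
  | succ k ih =>
    intro h1 h2
    rcases Nat.eq_zero_or_pos k with rfl | hk
    · refine ⟨{S}, ?_, ?_, ?_, ?_⟩
      · simp
      · intro A hA
        rw [Finset.mem_singleton] at hA
        subst hA
        rw [← Finset.card_pos]; omega
      · intro A hA B hB hAB
        rw [Finset.mem_singleton] at hA hB
        exact absurd (hA.trans hB.symm) hAB
      · simp
    · obtain ⟨P, hP⟩ := ih hk (le_of_lt h2)
      obtain ⟨P', hP', -⟩ := split_partition κ hP (by omega)
      exact ⟨P', hP'⟩

lemma csf_set_bddBelow {α : Type*} [DecidableEq α] (S : Finset α) (κ : α → ℝ) (k : ℕ) :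
    BddBelow {r : ℝ | ∃ P : Finset (Finset α), IsPartition S k P ∧ r = critVal κ P} := by
  refine ⟨0, fun r hr => ?_⟩
  obtain ⟨P, -, rfl⟩ := hr
  exact critVal_nonneg κ P

/-- Lemma 2.6 (combinatorial core): if `|S| = n ≥ 2` and the complexities of distinct elements
are distinct, then `H_S(1) > 0`, `H_S(n) = 0`, and `H_S` is monotonic non-increasing. -/
theorem stmt_8 {α : Type*} [DecidableEq α] (S : Finset α) (hS : 2 ≤ S.card) (κ : α → ℝ)
    (hinj : Set.InjOn κ S) :
    0 < csf S κ 1 ∧ csf S κ S.card = 0 ∧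
      ∀ k, 1 ≤ k → k ≤ S.card - 1 → csf S κ (k + 1) ≤ csf S κ k := by
  have hSne : S.Nonempty := Finset.card_pos.mp (by omega)
  refine ⟨?_, ?_, ?_⟩
  · -- csf S κ 1 > 0
    have hset : {r : ℝ | ∃ P : Finset (Finset α), IsPartition S 1 P ∧ r = critVal κ P}
        = {band κ S} := by
      ext r
      simp only [Set.mem_setOf_eq, Set.mem_singleton_iff]
      constructor
      · rintro ⟨P, ⟨hc, -, -, hsup⟩, rfl⟩
        obtain ⟨A, rfl⟩ := Finset.card_eq_one.mp hc
        have : A = S := by simpa using hsup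
        subst this
        simp [critVal]
      · rintro rfl
        refine ⟨{S}, ⟨by simp, ?_, ?_, by simp⟩, by simp [critVal]⟩
        · intro A hA; rw [Finset.mem_singleton] at hA; exact hA ▸ hSne
        · intro A hA B hB hAB
          rw [Finset.mem_singleton] at hA hB
          exact absurd (hA.trans hB.symm) hAB
    rw [csf, hset, csInf_singleton]
    obtain ⟨x, hx, y, hy, hxy⟩ := Finset.one_lt_card.mp hS
    rw [band, dif_pos hSne]
    have h1 := Finset.le_sup' κ hx
    have h2 := Finset.le_sup' κ hy
    have h3 := Finset.inf'_le κ hx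
    have h4 := Finset.inf'_le κ hy
    by_contra h
    push_neg at h
    have hxyeq : κ x = κ y := le_antisymm (by linarith) (by linarith)
    exact hxy (hinj hx hy hxyeq)
  · -- csf S κ S.card = 0
    have hmem : (0 : ℝ) ∈ {r : ℝ | ∃ P : Finset (Finset α),
        IsPartition S S.card P ∧ r = critVal κ P} := by
      refine ⟨S.image fun a => {a}, ⟨?_, ?_, ?_, ?_⟩, ?_⟩
      · exact Finset.card_image_of_injective S Finset.singleton_injective
      · intro A hA
        obtain ⟨a, -, rfl⟩ := Finset.mem_image.mp hA
        exact Finset.singleton_nonempty a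
      · intro A hA B hB hAB
        obtain ⟨a, -, rfl⟩ := Finset.mem_image.mp hA
        obtain ⟨b, -, rfl⟩ := Finset.mem_image.mp hB
        rw [Finset.disjoint_singleton]
        intro h; exact hAB (h ▸ rfl)
      · ext x
        simp [Finset.mem_sup]
      · rw [critVal]
        refine (Finset.sum_eq_zero fun A hA => ?_).symm
        obtain ⟨a, -, rfl⟩ := Finset.mem_image.mp hA
        exact band_singleton κ a
    refine le_antisymm (csInf_le (csf_set_bddBelow S κ _) hmem) ?_
    refine le_csInf ⟨0, hmem⟩ ?_
    rintro r ⟨P, -, rfl⟩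
    exact critVal_nonneg κ P
  · -- monotonicity
    intro k hk1 hk2
    have hklt : k < S.card := by omega
    obtain ⟨P₀, hP₀⟩ := exists_partition S κ k hk1 (le_of_lt hklt)
    refine le_csInf ⟨critVal κ P₀, P₀, hP₀, rfl⟩ ?_
    rintro r ⟨P, hP, rfl⟩
    obtain ⟨P', hP', hle⟩ := split_partition κ hP hklt
    exact le_trans (csInf_le (csf_set_bddBelow S κ _) ⟨P', hP', rfl⟩) hle
end
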